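/- Common interior ball for collision half-spaces: let x_1,…,x_n ∈ ℝ^d be centers of unit balls whose touching graph is connected (so |x_k − x_1| ≤ 2(n−1) for all k). Define w = (w_1,…,w_n) ∈ ℝ^{nd} with w_k = c(x_k − x_1), where c > 0 is chosen so |w| = 1. Then for every touching pair (i,j), ⟨w, z_{ij}⟩ ≥ 1/(√(2n)(n−1)), where z_{ij} = 2^{−3/2} z̃_{ij} and z̃_{ij} has blocks x_i − x_j at position i, x_j − x_i at position j, zeros elsewhere. Consequently B(w, r) ⊂ ⋂_{(i,j) touching} H_{ij} for r = 1/(√(2n)(n−1)), where H_{ij} = {v ∈ ℝ^{nd} : ⟨v, z_{ij}⟩ ≥ 0}. -/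

import Mathlib

open scoped Classical

noncomputable def fold {E : Type*} [NormedAddCommGroup E] [InnerProductSpace ℝ E]
    (n p v : E) : E :=
  if 0 ≤ (inner ℝ (v - p) n : ℝ) then v else v - (2 * (inner ℝ (v - p) n : ℝ)) • n

/-- The vector in `ℝ^{nd}` whose `i`-th block is `x i - x j`, `j`-th block is
`x j - x i`, and all other blocks are zero. -/
noncomputable def ztilde {d n : ℕ} (x : Fin n → EuclideanSpace ℝ (Fin d)) (i j : Fin n) :
    PiLp 2 fun _ : Fin n => EuclideanSpace ℝ (Fin d) :=
  WithLp.toLp 2 fun k => if k = i then x i - x j else if k = j then x j - x i else 0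

/-- The elastic collision map `T_{ij}` on pseudo-velocities of pinned balls. -/
noncomputable def collide {d n : ℕ} (x : Fin n → EuclideanSpace ℝ (Fin d)) (i j : Fin n)
    (v : PiLp 2 fun _ : Fin n => EuclideanSpace ℝ (Fin d)) :
    PiLp 2 fun _ : Fin n => EuclideanSpace ℝ (Fin d) :=
  let u : EuclideanSpace ℝ (Fin d) := ‖x i - x j‖⁻¹ • (x i - x j)
  if ‖x i - x j‖ = 2 ∧ (inner ℝ (v i - v j) (x i - x j) : ℝ) < 0 then
    WithLp.toLp 2 fun k =>
      if k = i then v i + (inner ℝ (v j) u : ℝ) • u - (inner ℝ (v i) u : ℝ) • u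
      else if k = j then v j + (inner ℝ (v i) u : ℝ) • u - (inner ℝ (v j) u : ℝ) • u
      else v k
  else v

/-- The touching graph of a family of pinned unit balls. -/
def touchGraph {d n : ℕ} (x : Fin n → EuclideanSpace ℝ (Fin d)) : SimpleGraph (Fin n) where
  Adj i j := i ≠ j ∧ ‖x i - x j‖ = 2
  symm := ⟨fun i j h => ⟨h.1.symm, by rw [norm_sub_rev]; exact h.2⟩⟩
  loopless := ⟨fun i h => h.1 rfl⟩

/-- The kissing number in dimension `d`: the maximal number of unit balls with
pairwise disjoint interiors all touching a fixed unit ball. -/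
noncomputable def kissingNumber (d : ℕ) : ℕ :=
  sSup { m : ℕ | ∃ y : Fin m → EuclideanSpace ℝ (Fin d),
    (∀ i, ‖y i‖ = 2) ∧ ∀ i j, i ≠ j → 2 ≤ ‖y i - y j‖ }

/-! For a touching pair `(i, j)`, `⟪w, z̃ᵢⱼ⟫ = ⟪wᵢ - wⱼ, xᵢ - xⱼ⟫ = c ‖xᵢ - xⱼ‖² = 4c`, while
`zᵢⱼ = 2^(-3/2) z̃ᵢⱼ` is a unit vector, so `⟪w, zᵢⱼ⟫ = √2 c`. Connectivity joins every `xₖ` to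
`x₀` by a path of at most `n - 1` touching pairs, so `‖wₖ‖ ≤ 2c(n - 1)` and
`1 = ‖w‖ ≤ 2c √n (n - 1)`, which is the claimed lower bound. By Cauchy–Schwarz, a ball of radius
`r` about `w` lies in the half-space `{⟪·, z⟫ ≥ 0}` as soon as `r ‖z‖ ≤ ⟪w, z⟫`. -/

open RealInnerProductSpace

theorem dist_le_mul_walk_length {V E : Type*} [PseudoMetricSpace E]
    {G : SimpleGraph V} {f : V → E} {r : ℝ} (hr : ∀ u v, G.Adj u v → dist (f u) (f v) ≤ r)
    {a b : V} (p : G.Walk a b) : dist (f a) (f b) ≤ r * p.length := by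
  induction p with
  | nil => simp
  | @cons u v b hadj p ih =>
    calc dist (f u) (f b) ≤ dist (f u) (f v) + dist (f v) (f b) := dist_triangle _ _ _
      _ ≤ r + r * p.length := add_le_add (hr u v hadj) ih
      _ = r * (SimpleGraph.Walk.cons hadj p).length := by
          rw [SimpleGraph.Walk.length_cons]; push_cast; ring

theorem dist_le_mul_card_sub_one_of_connected {V E : Type*} [Fintype V]
    [PseudoMetricSpace E] {G : SimpleGraph V} (hG : G.Connected) {f : V → E} {r : ℝ}
    (hr₀ : 0 ≤ r) (hr : ∀ u v, G.Adj u v → dist (f u) (f v) ≤ r) (a b : V) :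
    dist (f a) (f b) ≤ r * (Fintype.card V - 1) := by
  obtain ⟨p, hp⟩ := (hG a b).some.toPath
  have hlen : (p.length : ℝ) ≤ Fintype.card V - 1 := by
    have := hp.length_lt
    rw [le_sub_iff_add_le]
    exact_mod_cast this
  exact (dist_le_mul_walk_length hr p).trans (mul_le_mul_of_nonneg_left hlen hr₀)

theorem PiLp.norm_le_sqrt_card_mul {ι : Type*} [Fintype ι] {β : ι → Type*}
    [∀ i, SeminormedAddCommGroup (β i)] (v : PiLp 2 β) {R : ℝ} (hR : 0 ≤ R)
    (hv : ∀ i, ‖v i‖ ≤ R) : ‖v‖ ≤ √(Fintype.card ι) * R := by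
  rw [← Real.sqrt_sq hR, ← Real.sqrt_mul (Nat.cast_nonneg _), PiLp.norm_eq_of_L2]
  gcongr
  calc ∑ i, ‖v i‖ ^ 2 ≤ ∑ _i : ι, R ^ 2 := by gcongr with i; exact hv i
    _ = Fintype.card ι * R ^ 2 := by simp

theorem real_inner_nonneg_of_dist_le {F : Type*} [NormedAddCommGroup F] [InnerProductSpace ℝ F]
    {u w z : F} {r : ℝ} (hwz : r * ‖z‖ ≤ ⟪w, z⟫) (hu : dist u w ≤ r) : 0 ≤ ⟪u, z⟫ := by
  have hcs : -(dist u w * ‖z‖) ≤ ⟪u, z⟫ - ⟪w, z⟫ := by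
    rw [dist_eq_norm, ← inner_sub_left]
    exact neg_le_of_abs_le (abs_real_inner_le_norm _ _)
  have := mul_le_mul_of_nonneg_right hu (norm_nonneg z)
  linarith

section ztilde

variable {d n : ℕ} (x : Fin n → EuclideanSpace ℝ (Fin d)) (i j : Fin n)

theorem ztilde_self : ztilde x i i = 0 := by
  ext k : 1
  simp [ztilde]

@[simp]
theorem ztilde_apply_left : ztilde x i j i = x i - x j := by
  simp [ztilde]

@[simp]
theorem ztilde_apply_right : ztilde x i j j = x j - x i := by
  by_cases hij : j = i
  · subst hij; simp [ztilde]
  · simp [ztilde, hij]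

theorem inner_ztilde (v : PiLp 2 fun _ : Fin n => EuclideanSpace ℝ (Fin d)) :
    ⟪v, ztilde x i j⟫ = ⟪v i - v j, x i - x j⟫ := by
  by_cases hij : i = j
  · subst hij
    simp [ztilde_self]
  rw [PiLp.inner_apply, Finset.sum_eq_add_of_mem i j (Finset.mem_univ _) (Finset.mem_univ _) hij]
  · rw [ztilde_apply_left, ztilde_apply_right, ← neg_sub (x i), inner_neg_right, inner_sub_left]
    ring
  · intro k _ hk
    simp [ztilde, hk]

theorem ztilde_apply_sub_apply : ztilde x i j i - ztilde x i j j = (2 : ℝ) • (x i - x j) := by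
  rw [ztilde_apply_left, ztilde_apply_right, two_smul, ← neg_sub (x i), sub_neg_eq_add]

theorem norm_ztilde : ‖ztilde x i j‖ = √2 * ‖x i - x j‖ := by
  rw [← Real.sqrt_sq (norm_nonneg _), ← real_inner_self_eq_norm_sq, inner_ztilde,
    ztilde_apply_sub_apply, real_inner_smul_left, real_inner_self_eq_norm_sq,
    Real.sqrt_mul zero_le_two, Real.sqrt_sq (norm_nonneg _)]

end ztilde

theorem inner_ztilde_of_eq_smul_sub {d n : ℕ} {x : Fin n → EuclideanSpace ℝ (Fin d)}
    {w : PiLp 2 fun _ : Fin n => EuclideanSpace ℝ (Fin d)} {c : ℝ} {p : EuclideanSpace ℝ (Fin d)}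
    (hw : ∀ k, w k = c • (x k - p)) (i j : Fin n) :
    ⟪w, ztilde x i j⟫ = c * ‖x i - x j‖ ^ 2 := by
  rw [inner_ztilde, hw, hw, ← smul_sub, sub_sub_sub_cancel_right, real_inner_smul_left,
    real_inner_self_eq_norm_sq]

theorem two_rpow_neg_three_halves : (2 : ℝ) ^ (-(3 : ℝ) / 2) = (2 * √2)⁻¹ := by
  rw [neg_div, Real.rpow_neg zero_le_two, show (3 : ℝ) / 2 = 1 + 1 / 2 by norm_num,
    Real.rpow_add two_pos, Real.rpow_one, Real.sqrt_eq_rpow]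

theorem common_interior_ball {d n : ℕ} (hn : 2 ≤ n)
    (x : Fin n → EuclideanSpace ℝ (Fin d))
    (hconn : (touchGraph x).Connected)
    (c : ℝ) (hc : 0 < c)
    (w : PiLp 2 fun _ : Fin n => EuclideanSpace ℝ (Fin d))
    (hw : ∀ k, w k = c • (x k - x (⟨0, by omega⟩ : Fin n)))
    (hwnorm : ‖w‖ = 1) :
    (∀ i j, ‖x i - x j‖ = 2 →
      1 / (Real.sqrt (2 * n) * ((n : ℝ) - 1))
        ≤ (inner ℝ w (((2 : ℝ) ^ (-(3 : ℝ) / 2)) • ztilde x i j) : ℝ)) ∧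
    ∀ u, dist u w ≤ 1 / (Real.sqrt (2 * n) * ((n : ℝ) - 1)) →
      ∀ i j, ‖x i - x j‖ = 2 →
        0 ≤ (inner ℝ u (((2 : ℝ) ^ (-(3 : ℝ) / 2)) • ztilde x i j) : ℝ) := by
  have hn₁ : (1 : ℝ) ≤ n - 1 := by
    rw [le_sub_iff_add_le]; exact_mod_cast hn
  have hw_le : ∀ k, ‖w k‖ ≤ c * (2 * (n - 1)) := fun k => by
    rw [hw, norm_smul, Real.norm_of_nonneg hc.le, ← dist_eq_norm]
    gcongr
    simpa using dist_le_mul_card_sub_one_of_connected hconn zero_le_two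
      (fun u v huv => (dist_eq_norm _ _).trans_le huv.2.le) k _
  have hc_lower : 1 ≤ √2 * c * (√(2 * n) * (n - 1)) := by
    have := PiLp.norm_le_sqrt_card_mul w (by positivity) hw_le
    rw [hwnorm, Fintype.card_fin] at this
    have h2 : √2 * √(2 * n) = 2 * √n := by
      rw [Real.sqrt_mul zero_le_two, ← mul_assoc, Real.mul_self_sqrt zero_le_two]
    calc (1 : ℝ) ≤ √n * (c * (2 * (n - 1))) := this
      _ = c * (√2 * √(2 * n)) * (n - 1) := by rw [h2]; ring
      _ = √2 * c * (√(2 * n) * (n - 1)) := by ring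
  have hz : ∀ i j, ‖x i - x j‖ = 2 →
      ⟪w, (2 : ℝ) ^ (-(3 : ℝ) / 2) • ztilde x i j⟫ = √2 * c ∧
        ‖(2 : ℝ) ^ (-(3 : ℝ) / 2) • ztilde x i j‖ = 1 := by
    intro i j hij
    rw [real_inner_smul_right, inner_ztilde_of_eq_smul_sub hw, norm_smul, norm_ztilde, hij,
      two_rpow_neg_three_halves, Real.norm_of_nonneg (by positivity)]
    constructor
    · field_simp
      norm_num
    · field_simp
  have hlower : ∀ i j, ‖x i - x j‖ = 2 → 1 / (√(2 * n) * (n - 1)) ≤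
      ⟪w, (2 : ℝ) ^ (-(3 : ℝ) / 2) • ztilde x i j⟫ := fun i j hij => by
    rw [(hz i j hij).1, div_le_iff₀ (by positivity)]
    exact hc_lower
  refine ⟨hlower, fun u hu i j hij => real_inner_nonneg_of_dist_le ?_ hu⟩
  rw [(hz i j hij).2, mul_one]
  exact hlower i j hij
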